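/- Consider the uncertain unicycle with unknown constants b₁, b₂ > 0 under the adaptive feedback and update laws, where V : {ρ>0}×ℝ² → [0,∞) is any nonnegative C¹ function. Along every closed-loop solution (ρ,δ,γ,ε̂₁,ε̂₂) on an interval I with ρ(t) > 0, the adaptive Lyapunov function V_a(t) = ln(1 + n(V(t))) + (b₁/(2μ₁)) ε̃₁(t)² + (b₂/(2μ₂)) ε̃₂(t)², where V(t) = V(ρ(t),δ(t),γ(t)) and ε̃ᵢ(t) = 1/bᵢ − ε̂ᵢ(t), is differentiable and satisfies dV_a/dt(t) = −(n′(V(t))/(1 + n(V(t)))) (ν₁(t)² + ν₂(t)²) ≤ 0 for all t ∈ I, where ν₁, ν₂ are evaluated along the trajectory. -/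

import Mathlib

/-!
STATEMENT 11: Uncertain unicycle (unknown input coefficients b₁, b₂ > 0) under
the adaptive feedback v = −ε̂₁ ρ ν₁, ω = −ε̂₂ ν₂ with normalized gradient update
laws: along every closed-loop solution with ρ > 0, the adaptive Lyapunov
function V_a = ln(1+n(V)) + (b₁/2μ₁)ε̃₁² + (b₂/2μ₂)ε̃₂² is differentiable with
dV_a/dt = −(n′(V)/(1+n(V)))(ν₁² + ν₂²) ≤ 0.
-/
noncomputable section

open Real Set Filter

/-- The continuous linear map (u,w,x) ↦ aρ·u + aδ·w + aγ·x, the total derivative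
of a function of (ρ,δ,γ) with partial derivatives (aρ,aδ,aγ). -/
def gradMap (aρ aδ aγ : ℝ) : (ℝ × ℝ × ℝ) →L[ℝ] ℝ :=
  aρ • ContinuousLinearMap.fst ℝ ℝ (ℝ × ℝ)
    + aδ • ((ContinuousLinearMap.fst ℝ ℝ ℝ).comp (ContinuousLinearMap.snd ℝ ℝ (ℝ × ℝ)))
    + aγ • ((ContinuousLinearMap.snd ℝ ℝ ℝ).comp (ContinuousLinearMap.snd ℝ ℝ (ℝ × ℝ)))

/-- ν₁ = −(∂V/∂ρ) ρ cos γ + (∂V/∂δ + ∂V/∂γ) sin γ at the state p = (ρ,δ,γ). -/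
def nuOne (Vρ Vδ Vγ : ℝ × ℝ × ℝ → ℝ) (p : ℝ × ℝ × ℝ) : ℝ :=
  -(Vρ p) * p.1 * Real.cos p.2.2 + (Vδ p + Vγ p) * Real.sin p.2.2

/-- ν₂ = −∂V/∂γ. -/
def nuTwo (Vγ : ℝ × ℝ × ℝ → ℝ) (p : ℝ × ℝ × ℝ) : ℝ := -(Vγ p)

/-! The feedback turns `V̇` into `-b₁ ε̂₁ ν₁² - b₂ ε̂₂ ν₂²`, which involves the unknown `bᵢ`.
Since `(bᵢ/2μᵢ) ε̃ᵢ²` has derivative `-(n'/(1+n)) (1 - bᵢ ε̂ᵢ) νᵢ²` under the update laws, these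
terms cancel the `bᵢ ε̂ᵢ` parts of `(n'/(1+n)) V̇`, the derivative of `ln (1 + n V)`, leaving
`-(n'/(1+n)) (ν₁² + ν₂²)`, which is nonpositive because `n` is increasing. -/

lemma gradMap_apply (aρ aδ aγ : ℝ) (q : ℝ × ℝ × ℝ) :
    gradMap aρ aδ aγ q = aρ * q.1 + aδ * q.2.1 + aγ * q.2.2 := by
  simp [gradMap]

lemma HasDerivAt.nonneg_of_monotoneOn_Ici {g : ℝ → ℝ} {g' a x : ℝ} (hd : HasDerivAt g g' x)
    (hg : MonotoneOn g (Ici a)) (hx : a ≤ x) : 0 ≤ g' := by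
  have hacc : AccPt x (𝓟 (Ici x)) := by
    rw [accPt_principal_iff_nhdsWithin, Ici_sdiff_left]
    infer_instance
  exact hd.hasDerivWithinAt.nonneg_of_monotoneOn hacc (hg.mono (Ici_subset_Ici.2 hx))

/-- The unicycle vector field at the state `p` under the feedback `v = -e₁ ρ ν₁`, `ω = -e₂ ν₂`
with fixed gain estimates `e₁, e₂`. -/
def closedLoopField (b₁ b₂ : ℝ) (Vρ Vδ Vγ : ℝ × ℝ × ℝ → ℝ) (e₁ e₂ : ℝ) (p : ℝ × ℝ × ℝ) :
    ℝ × ℝ × ℝ :=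
  (-(b₁ * (-e₁ * p.1 * nuOne Vρ Vδ Vγ p)) * Real.cos p.2.2,
    b₁ * ((-e₁ * p.1 * nuOne Vρ Vδ Vγ p) / p.1) * Real.sin p.2.2,
    b₁ * ((-e₁ * p.1 * nuOne Vρ Vδ Vγ p) / p.1) * Real.sin p.2.2
      - b₂ * (-e₂ * nuTwo Vγ p))

lemma gradMap_closedLoopField (b₁ b₂ : ℝ) (Vρ Vδ Vγ : ℝ × ℝ × ℝ → ℝ) (e₁ e₂ : ℝ)
    {p : ℝ × ℝ × ℝ} (hp : p.1 ≠ 0) :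
    gradMap (Vρ p) (Vδ p) (Vγ p) (closedLoopField b₁ b₂ Vρ Vδ Vγ e₁ e₂ p)
      = -(b₁ * e₁ * nuOne Vρ Vδ Vγ p ^ 2) - b₂ * e₂ * nuTwo Vγ p ^ 2 := by
  simp only [gradMap_apply, closedLoopField, nuOne, nuTwo]
  field_simp
  ring

lemma hasDerivAt_comp_closedLoop {b₁ b₂ : ℝ} {V Vρ Vδ Vγ : ℝ × ℝ × ℝ → ℝ}
    {x : ℝ → ℝ × ℝ × ℝ} {e₁ e₂ t : ℝ} (hx₁ : (x t).1 ≠ 0)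
    (hV : HasFDerivAt V (gradMap (Vρ (x t)) (Vδ (x t)) (Vγ (x t))) (x t))
    (hx : HasDerivAt x (closedLoopField b₁ b₂ Vρ Vδ Vγ e₁ e₂ (x t)) t) :
    HasDerivAt (V ∘ x)
      (-(b₁ * e₁ * nuOne Vρ Vδ Vγ (x t) ^ 2) - b₂ * e₂ * nuTwo Vγ (x t) ^ 2) t := by
  rw [← gradMap_closedLoopField b₁ b₂ Vρ Vδ Vγ e₁ e₂ hx₁]
  exact hV.comp_hasDerivAt t hx

lemma HasDerivAt.scaled_sq_inv_sub {b μ c w t : ℝ} {e : ℝ → ℝ} (hb : b ≠ 0) (hμ : μ ≠ 0)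
    (he : HasDerivAt e (μ * c * w) t) :
    HasDerivAt (fun s => b / (2 * μ) * (1 / b - e s) ^ 2) (-(c * w * (1 - b * e t))) t := by
  refine (((he.const_sub (1 / b)).fun_pow 2).const_mul (b / (2 * μ))).congr_deriv ?_
  norm_num
  field_simp

theorem adaptive_Lyapunov_derivative
    (b₁ b₂ μ₁ μ₂ : ℝ) (hb₁ : 0 < b₁) (hb₂ : 0 < b₂) (hμ₁ : 0 < μ₁) (hμ₂ : 0 < μ₂)
    (V Vρ Vδ Vγ : ℝ × ℝ × ℝ → ℝ) (n n' : ℝ → ℝ)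
    -- V is a nonnegative C¹ function on {ρ > 0} × ℝ² with partials Vρ, Vδ, Vγ
    (hV : ∀ p : ℝ × ℝ × ℝ, 0 < p.1 → HasFDerivAt V (gradMap (Vρ p) (Vδ p) (Vγ p)) p)
    (hVnonneg : ∀ p : ℝ × ℝ × ℝ, 0 < p.1 → 0 ≤ V p)
    -- n is a C¹, strictly increasing normalization function with n(0) = 0
    (hn : ∀ s : ℝ, 0 ≤ s → HasDerivAt n (n' s) s)
    (hnmono : StrictMonoOn n (Set.Ici 0))
    (hnnonneg : ∀ s : ℝ, 0 ≤ s → 0 ≤ n s)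
    -- the closed-loop solution with feedback v = −ε̂₁ ρ ν₁, ω = −ε̂₂ ν₂
    (I : Set ℝ) (ρ δ γ e₁ e₂ : ℝ → ℝ)
    (hρpos : ∀ t ∈ I, 0 < ρ t)
    (hρ : ∀ t ∈ I, HasDerivAt ρ
      (-(b₁ * (-(e₁ t) * ρ t * nuOne Vρ Vδ Vγ (ρ t, δ t, γ t)))
        * Real.cos (γ t)) t)
    (hδ : ∀ t ∈ I, HasDerivAt δ
      (b₁ * ((-(e₁ t) * ρ t * nuOne Vρ Vδ Vγ (ρ t, δ t, γ t)) / ρ t)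
        * Real.sin (γ t)) t)
    (hγ : ∀ t ∈ I, HasDerivAt γ
      (b₁ * ((-(e₁ t) * ρ t * nuOne Vρ Vδ Vγ (ρ t, δ t, γ t)) / ρ t)
          * Real.sin (γ t)
        - b₂ * (-(e₂ t) * nuTwo Vγ (ρ t, δ t, γ t))) t)
    -- the update laws
    (he₁ : ∀ t ∈ I, HasDerivAt e₁
      (μ₁ * (n' (V (ρ t, δ t, γ t)) / (1 + n (V (ρ t, δ t, γ t))))
        * nuOne Vρ Vδ Vγ (ρ t, δ t, γ t) ^ 2) t)
    (he₂ : ∀ t ∈ I, HasDerivAt e₂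
      (μ₂ * (n' (V (ρ t, δ t, γ t)) / (1 + n (V (ρ t, δ t, γ t))))
        * nuTwo Vγ (ρ t, δ t, γ t) ^ 2) t) :
    ∀ t ∈ I,
      HasDerivAt
        (fun s => Real.log (1 + n (V (ρ s, δ s, γ s)))
          + b₁ / (2 * μ₁) * (1 / b₁ - e₁ s) ^ 2
          + b₂ / (2 * μ₂) * (1 / b₂ - e₂ s) ^ 2)
        (-(n' (V (ρ t, δ t, γ t)) / (1 + n (V (ρ t, δ t, γ t))))
          * (nuOne Vρ Vδ Vγ (ρ t, δ t, γ t) ^ 2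
            + nuTwo Vγ (ρ t, δ t, γ t) ^ 2)) t
      ∧ (-(n' (V (ρ t, δ t, γ t)) / (1 + n (V (ρ t, δ t, γ t))))
          * (nuOne Vρ Vδ Vγ (ρ t, δ t, γ t) ^ 2
            + nuTwo Vγ (ρ t, δ t, γ t) ^ 2)) ≤ 0 := by
  intro t ht
  set p : ℝ × ℝ × ℝ := (ρ t, δ t, γ t)
  have hρt : 0 < p.1 := hρpos t ht
  have hVp : 0 ≤ V p := hVnonneg p hρt
  have hnV : 0 < 1 + n (V p) := by linarith [hnnonneg _ hVp]
  have hcurve : HasDerivAt (fun s => (ρ s, δ s, γ s))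
      (closedLoopField b₁ b₂ Vρ Vδ Vγ (e₁ t) (e₂ t) p) t :=
    (hρ t ht).prodMk ((hδ t ht).prodMk (hγ t ht))
  have hVdot := hasDerivAt_comp_closedLoop hρt.ne' (hV p hρt) hcurve
  have hlog := (((hn _ hVp).comp t hVdot).const_add 1).log hnV.ne'
  have herr₁ := (he₁ t ht).scaled_sq_inv_sub hb₁.ne' hμ₁.ne'
  have herr₂ := (he₂ t ht).scaled_sq_inv_sub hb₂.ne' hμ₂.ne'
  have hn'V : 0 ≤ n' (V p) := (hn _ hVp).nonneg_of_monotoneOn_Ici hnmono.monotoneOn hVp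
  refine ⟨((hlog.add herr₁).add herr₂).congr_deriv (by simp only [Function.comp_apply]; ring), ?_⟩
  rw [neg_mul, neg_nonpos]
  exact mul_nonneg (div_nonneg hn'V hnV.le) (by positivity)

end
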